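/- arXiv:1603.08370 — 2 statements merged into one kernel-verified Lean document; each statement's English description precedes it below -/
import Mathlib

section
/- For every signed graph (G,Σ), arccos(ℰ(G,Σ))/π ⊆ MET(G,Σ); that is, if the signed PSD completion problem P(G,Σ,c) is feasible for c ∈ [−1,1]^E, then arccos(c)/π satisfies all odd-cycle inequalities of MET(G,Σ). -/
/-! ## Signed graphs (multigraphs with signed edges) -/

structure SignedGraph where
  V : Type
  E : Type
  fV : Fintype V
  dV : DecidableEq V
  fE : Fintype E
  dE : DecidableEq E
  ends : E → Sym2 V
  odd : E → Prop

attribute [instance] SignedGraph.fV SignedGraph.dV SignedGraph.fE SignedGraph.dE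

open Classical in
/-- The sign `σ(e)` of an edge: `-1` if odd, `+1` if even. -/
noncomputable def SignedGraph.sgn (G : SignedGraph) (e : G.E) : ℝ :=
  if G.odd e then -1 else 1

/-- `c` is nondegenerate: `c(e) ≠ σ(e)` for every edge. -/
def SignedGraph.NondegWeights (G : SignedGraph) (c : G.E → ℝ) : Prop :=
  ∀ e, (G.odd e → c e ≠ -1) ∧ (¬ G.odd e → c e ≠ 1)

/-- The vector `arccos(c)/π`. -/
noncomputable def SignedGraph.metric (G : SignedGraph) (c : G.E → ℝ) : G.E → ℝ :=
  fun e => Real.arccos (c e) / Real.pi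

/-! ## Cycles and paths -/

/-- A cycle of length `k+1` in a signed multigraph. -/
structure GCycle (G : SignedGraph) where
  k : ℕ
  vtx : Fin (k + 1) → G.V
  edge : Fin (k + 1) → G.E
  vtx_inj : Function.Injective vtx
  edge_inj : Function.Injective edge
  incid : ∀ i, G.ends (edge i) = s(vtx i, vtx (i + 1))

namespace GCycle

variable {G : SignedGraph}

def len (C : GCycle G) : ℕ := C.k + 1

def vertexSet (C : GCycle G) : Set G.V := Set.range C.vtx

def edgeSet (C : GCycle G) : Set G.E := Set.range C.edge

/-- The number of odd edges of the cycle, i.e. `|E(C) ∩ Σ|`. -/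
noncomputable def oddCount (C : GCycle G) : ℕ := Nat.card {i : Fin (C.k + 1) // G.odd (C.edge i)}

/-- An odd cycle: odd number of odd edges. -/
def IsOdd (C : GCycle G) : Prop := Odd C.oddCount

open Classical in
/-- `val(C,x) = Σ_{e ∈ E(C)∖Σ} x(e) + Σ_{e ∈ E(C)∩Σ} (1 - x(e))`. -/
noncomputable def val (C : GCycle G) (x : G.E → ℝ) : ℝ :=
  ∑ i, if G.odd (C.edge i) then 1 - x (C.edge i) else x (C.edge i)

end GCycle

/-- A path of length `len` in a signed multigraph. -/
structure GPath (G : SignedGraph) where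
  len : ℕ
  vtx : Fin (len + 1) → G.V
  edge : Fin len → G.E
  vtx_inj : Function.Injective vtx
  edge_inj : Function.Injective edge
  incid : ∀ i : Fin len, G.ends (edge i) = s(vtx i.castSucc, vtx i.succ)

namespace GPath

variable {G : SignedGraph}

def first (P : GPath G) : G.V := P.vtx 0

def last (P : GPath G) : G.V := P.vtx (Fin.last P.len)

def vertexSet (P : GPath G) : Set G.V := Set.range P.vtx

def edgeSet (P : GPath G) : Set G.E := Set.range P.edge

/-- The internal vertices of the path. -/
def inner (P : GPath G) : Set G.V :=
  {w | ∃ i : Fin (P.len + 1), P.vtx i = w ∧ i ≠ 0 ∧ i ≠ Fin.last P.len}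

noncomputable def oddCount (P : GPath G) : ℕ := Nat.card {i : Fin P.len // G.odd (P.edge i)}

/-- An odd path: odd number of odd edges. -/
def IsOdd (P : GPath G) : Prop := Odd P.oddCount

end GPath

/-- Two paths are internally disjoint: edge-disjoint, and every common vertex
is an endvertex of both. -/
def InternallyDisjoint {G : SignedGraph} (P Q : GPath G) : Prop :=
  Disjoint P.edgeSet Q.edgeSet ∧
  ∀ w, w ∈ P.vertexSet → w ∈ Q.vertexSet →
    (w = P.first ∨ w = P.last) ∧ (w = Q.first ∨ w = Q.last)

/-! ## The signed metric polytope, tightness -/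

/-- `x ∈ MET(G,Σ)`. -/
def InMET (G : SignedGraph) (x : G.E → ℝ) : Prop :=
  (∀ e, x e ∈ Set.Icc (0 : ℝ) 1) ∧
  ∀ C : GCycle G, C.IsOdd →
    1 - (C.oddCount : ℝ) ≤ ∑ i, G.sgn (C.edge i) * x (C.edge i)

/-- A tight odd cycle with respect to `c`: `val(C, arccos(c)/π) = 1`. -/
def IsTight (G : SignedGraph) (c : G.E → ℝ) (C : GCycle G) : Prop :=
  C.IsOdd ∧ C.val (G.metric c) = 1

/-- A tight edge: lies on some tight odd cycle. -/
def TightEdge (G : SignedGraph) (c : G.E → ℝ) (e : G.E) : Prop :=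
  ∃ C : GCycle G, IsTight G c C ∧ e ∈ C.edgeSet

/-- A strictly tight edge: lies on a tight odd cycle of length at least three. -/
def StrictlyTight (G : SignedGraph) (c : G.E → ℝ) (e : G.E) : Prop :=
  ∃ C : GCycle G, IsTight G c C ∧ 3 ≤ C.len ∧ e ∈ C.edgeSet

/-- A degenerate edge: `c(e) = σ(e)`. -/
def DegenerateEdge (G : SignedGraph) (c : G.E → ℝ) (e : G.E) : Prop :=
  (G.odd e ∧ c e = -1) ∨ (¬ G.odd e ∧ c e = 1)

/-! ## The signed PSD matrix completion problem and its dual -/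

/-- Feasibility of `P(G,Σ,c)` with the edge constraints restricted to `Es`. -/
def IsFeasibleE (G : SignedGraph) (Es : Set G.E) (c : G.E → ℝ)
    (X : Matrix G.V G.V ℝ) : Prop :=
  X.PosSemidef ∧ (∀ i, X i i = 1) ∧
  ∀ e ∈ Es, ∀ u v : G.V, G.ends e = s(u, v) →
    (G.odd e → X u v ≤ c e) ∧ (¬ G.odd e → c e ≤ X u v)

/-- Feasibility of the signed PSD completion problem `P(G,Σ,c)`. -/
def IsFeasible (G : SignedGraph) (c : G.E → ℝ) (X : Matrix G.V G.V ℝ) : Prop :=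
  IsFeasibleE G Set.univ c X

/-- The symmetric matrix `E_ij = (e_i e_jᵀ + e_j e_iᵀ)/2` attached to an unordered pair. -/
noncomputable def symPairMat {V : Type} [Fintype V] [DecidableEq V] (p : Sym2 V) :
    Matrix V V ℝ :=
  Sym2.lift ⟨fun u v => (1 / 2 : ℝ) • (Matrix.single u v 1 + Matrix.single v u 1),
    fun u v => by simp [add_comm]⟩ p

/-- The matrix `Ω = Σ_i ω(i) E_ii + Σ_e ω(e) E_e` of a dual vector `ω ∈ ℝ^{V ∪ E}`. -/
noncomputable def DualMat (G : SignedGraph) (ωV : G.V → ℝ) (ωE : G.E → ℝ) :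
    Matrix G.V G.V ℝ :=
  Matrix.diagonal ωV + ∑ e, ωE e • symPairMat (G.ends e)

/-- A dual solution of `P(G,Σ,c)`. -/
def IsDualSol (G : SignedGraph) (ωV : G.V → ℝ) (ωE : G.E → ℝ) : Prop :=
  (∀ e, ¬ G.odd e → ωE e ≤ 0) ∧ (∀ e, G.odd e → 0 ≤ ωE e) ∧
  (DualMat G ωV ωE).PosSemidef

/-- The strict complementarity condition (edge constraints restricted to `Es`). -/
def StrictCompE (G : SignedGraph) (Es : Set G.E) (c : G.E → ℝ) (X : Matrix G.V G.V ℝ)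
    (ωV : G.V → ℝ) (ωE : G.E → ℝ) : Prop :=
  (X * DualMat G ωV ωE).trace = 0 ∧
  (∀ e ∈ Es, ∀ u v : G.V, G.ends e = s(u, v) → (X u v - c e) * ωE e = 0) ∧
  X.rank + (DualMat G ωV ωE).rank = Fintype.card G.V

/-- The strict complementarity condition for `P(G,Σ,c)`. -/
def StrictComp (G : SignedGraph) (c : G.E → ℝ) (X : Matrix G.V G.V ℝ)
    (ωV : G.V → ℝ) (ωE : G.E → ℝ) : Prop :=
  StrictCompE G Set.univ c X ωV ωE

/-- A maximum-rank feasible solution (edge constraints restricted to `Es`). -/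
def IsMaxRankSolE (G : SignedGraph) (Es : Set G.E) (c : G.E → ℝ)
    (X : Matrix G.V G.V ℝ) : Prop :=
  IsFeasibleE G Es c X ∧ ∀ Y, IsFeasibleE G Es c Y → Y.rank ≤ X.rank

/-- A maximum-rank feasible solution of `P(G,Σ,c)`. -/
def IsMaxRankSol (G : SignedGraph) (c : G.E → ℝ) (X : Matrix G.V G.V ℝ) : Prop :=
  IsMaxRankSolE G Set.univ c X

/-- A nice dual solution: a dual solution satisfying the strict complementarity
condition with some (equivalently, any) maximum-rank feasible solution. -/
def IsNiceDual (G : SignedGraph) (c : G.E → ℝ) (ωV : G.V → ℝ) (ωE : G.E → ℝ) : Prop :=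
  IsDualSol G ωV ωE ∧ ∃ X, IsMaxRankSol G c X ∧ StrictComp G c X ωV ωE

/-! ## Resigning, minors -/

/-- The edge `e` lies on the cut `δ(S)`. -/
def Crosses (G : SignedGraph) (S : Set G.V) (e : G.E) : Prop :=
  ∃ u v, G.ends e = s(u, v) ∧ ((u ∈ S) ↔ (v ∉ S))

/-- `H` is (up to relabeling) obtained from `G` by resigning on a vertex set. -/
def IsResign (G H : SignedGraph) : Prop :=
  ∃ (S : Set G.V) (fV : G.V ≃ H.V) (fE : G.E ≃ H.E),
    (∀ e, H.ends (fE e) = (G.ends e).map fV) ∧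
    (∀ e, H.odd (fE e) ↔ Xor' (G.odd e) (Crosses G S e))

/-- `H` is (up to relabeling) obtained from `G` by deleting edges. -/
def IsEdgeDeletion (G H : SignedGraph) : Prop :=
  ∃ (fV : G.V ≃ H.V) (fE : H.E ↪ G.E),
    (∀ e, H.ends e = (G.ends (fE e)).map fV) ∧
    (∀ e, H.odd e ↔ G.odd (fE e))

/-- `H` is (up to relabeling) obtained from `G` by contracting an even edge. -/
def IsContraction (G H : SignedGraph) : Prop :=
  ∃ (e₀ : G.E) (u v : G.V), u ≠ v ∧ G.ends e₀ = s(u, v) ∧ ¬ G.odd e₀ ∧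
    ∃ (f : G.V → H.V) (fE : {e : G.E // e ≠ e₀} ≃ H.E),
      Function.Surjective f ∧
      (∀ a b, f a = f b ↔ (a = b ∨ (a = u ∧ b = v) ∨ (a = v ∧ b = u))) ∧
      (∀ e : {e : G.E // e ≠ e₀}, H.ends (fE e) = (G.ends e.1).map f) ∧
      (∀ e : {e : G.E // e ≠ e₀}, H.odd (fE e) ↔ G.odd e.1)

def MinorStep (G H : SignedGraph) : Prop :=
  IsEdgeDeletion G H ∨ IsResign G H ∨ IsContraction G H

/-- `H` is a minor of `G`. -/
def HasAsMinor (G H : SignedGraph) : Prop := Relation.ReflTransGen MinorStep G H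

/-- Sign equivalence: related by a series of resignings. -/
def SignEquiv (G H : SignedGraph) : Prop := Relation.ReflTransGen IsResign G H

/-- `H` is the odd-`K₄`: `K₄` with all six edges odd. -/
def IsOddK4 (H : SignedGraph) : Prop :=
  Fintype.card H.V = 4 ∧ Fintype.card H.E = 6 ∧ (∀ e, H.odd e) ∧
  (∀ e, ¬ (H.ends e).IsDiag) ∧ ∀ u v : H.V, u ≠ v → ∃ e, H.ends e = s(u, v)

/-- `H` is the odd-`K₃²`: the triangle with every edge doubled into an odd/even
parallel pair. -/
def IsOddK3sq (H : SignedGraph) : Prop :=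
  Fintype.card H.V = 3 ∧ Fintype.card H.E = 6 ∧ (∀ e, ¬ (H.ends e).IsDiag) ∧
  ∀ u v : H.V, u ≠ v →
    (∃ e, H.ends e = s(u, v) ∧ H.odd e) ∧ (∃ e, H.ends e = s(u, v) ∧ ¬ H.odd e)

def OddK4Free (G : SignedGraph) : Prop := ¬ ∃ H, HasAsMinor G H ∧ IsOddK4 H

def OddK3sqFree (G : SignedGraph) : Prop := ¬ ∃ H, HasAsMinor G H ∧ IsOddK3sq H

/-- 2-connectivity: removing any vertex leaves the rest connected. -/
def TwoConnected (G : SignedGraph) : Prop :=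
  ∀ w u v : G.V, u ≠ w → v ≠ w →
    ∃ P : GPath G, P.first = u ∧ P.last = v ∧ ∀ i, P.vtx i ≠ w

/-! ## The hypergraph `ℋ(𝒞)` -/

def blockUnion {G : SignedGraph} (B : Set (GCycle G)) : Set G.V :=
  ⋃ C ∈ B, C.vertexSet

/-- A partition of the cycle family `𝒞` such that the vertex-set unions of
distinct blocks share at most one vertex. -/
def IsValidPartition (G : SignedGraph) (𝒞 : Set (GCycle G))
    (P : Set (Set (GCycle G))) : Prop :=
  (∀ B ∈ P, B.Nonempty) ∧ (∀ B ∈ P, B ⊆ 𝒞) ∧ (∀ C ∈ 𝒞, ∃ B ∈ P, C ∈ B) ∧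
  (∀ B ∈ P, ∀ B' ∈ P, B ≠ B' → Disjoint B B') ∧
  (∀ B ∈ P, ∀ B' ∈ P, B ≠ B' → (blockUnion B ∩ blockUnion B').Subsingleton)

/-- `ℰ` is the hyperedge family of `ℋ(𝒞)`: the block unions of the finest valid
partition of `𝒞`. -/
def IsHypergraphOf (G : SignedGraph) (𝒞 : Set (GCycle G)) (ℰ : Set (Set G.V)) : Prop :=
  ∃ P, IsValidPartition G 𝒞 P ∧
    (∀ Q, IsValidPartition G 𝒞 Q → ∀ B ∈ P, ∃ B' ∈ Q, B ⊆ B') ∧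
    ℰ = blockUnion '' P

/-- A hypergraph (given by its hyperedge family) is acyclic: its vertex-hyperedge
incidence bipartite graph has no cycle. -/
def HypAcyclic {V : Type} (ℰ : Set (Set V)) : Prop :=
  ¬ ∃ (k : ℕ) (v : Fin (k + 2) → V) (Ed : Fin (k + 2) → Set V),
      Function.Injective v ∧ Function.Injective Ed ∧ (∀ i, Ed i ∈ ℰ) ∧
      ∀ i, v i ∈ Ed i ∧ v (i + 1) ∈ Ed i

/-- A hypergraph forms a triangle: no isolated vertex, and exactly three
hyperedges pairwise intersecting in exactly one vertex. -/
def HypTriangle {V : Type} (ℰ : Set (Set V)) : Prop :=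
  (∀ x : V, ∃ s ∈ ℰ, x ∈ s) ∧
  ∃ s₁ s₂ s₃ : Set V, s₁ ≠ s₂ ∧ s₁ ≠ s₃ ∧ s₂ ≠ s₃ ∧ ℰ = {s₁, s₂, s₃} ∧
    (∃ x, s₁ ∩ s₂ = {x}) ∧ (∃ x, s₁ ∩ s₃ = {x}) ∧ (∃ x, s₂ ∩ s₃ = {x})

/-! ## Reduction of a weighted instance to a nondegenerate one -/

open Classical in
/-- The edge weight obtained from `c` after resigning on `S`. -/
noncomputable def resignVal (G : SignedGraph) (S : Set G.V) (c : G.E → ℝ) (e : G.E) : ℝ :=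
  if Crosses G S e then -c e else c e

/-- Resigning a weighted signed graph. -/
def CResignRel (G : SignedGraph) (c : G.E → ℝ) (H : SignedGraph) (c' : H.E → ℝ) : Prop :=
  ∃ (S : Set G.V) (fV : G.V ≃ H.V) (fE : G.E ≃ H.E),
    (∀ e, H.ends (fE e) = (G.ends e).map fV) ∧
    (∀ e, H.odd (fE e) ↔ Xor' (G.odd e) (Crosses G S e)) ∧
    (∀ e, c' (fE e) = resignVal G S c e)

/-- Contracting an even edge `e₀` with `c(e₀) = 1` in a weighted signed graph. -/
def CContractRel (G : SignedGraph) (c : G.E → ℝ) (H : SignedGraph) (c' : H.E → ℝ) : Prop :=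
  ∃ (e₀ : G.E) (u v : G.V), u ≠ v ∧ G.ends e₀ = s(u, v) ∧ ¬ G.odd e₀ ∧ c e₀ = 1 ∧
    ∃ (f : G.V → H.V) (fE : {e : G.E // e ≠ e₀} ≃ H.E),
      Function.Surjective f ∧
      (∀ a b, f a = f b ↔ (a = b ∨ (a = u ∧ b = v) ∨ (a = v ∧ b = u))) ∧
      (∀ e : {e : G.E // e ≠ e₀}, H.ends (fE e) = (G.ends e.1).map f) ∧
      (∀ e : {e : G.E // e ≠ e₀}, H.odd (fE e) ↔ G.odd e.1) ∧
      (∀ e : {e : G.E // e ≠ e₀}, c' (fE e) = c e.1)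

/-- A weighted signed graph instance. -/
def WInst : Type 1 := Σ G : SignedGraph, (G.E → ℝ)

/-- The reduction relation on weighted instances: a sequence of resignings and
contractions of even edges of weight `1`. -/
def ReducesTo (A B : WInst) : Prop :=
  Relation.ReflTransGen
    (fun X Y => CResignRel X.1 X.2 Y.1 Y.2 ∨ CContractRel X.1 X.2 Y.1 Y.2) A B

/-! ## Subproblems on subgraphs (for the gluing lemma) -/

/-- Feasibility of the completion problem of the subgraph with vertices `Vs` and
edges `Es`. -/
def IsFeasibleOn (G : SignedGraph) (Vs : Finset G.V) (Es : Finset G.E) (c : G.E → ℝ)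
    (X : Matrix ↥Vs ↥Vs ℝ) : Prop :=
  X.PosSemidef ∧ (∀ i, X i i = 1) ∧
  ∀ e ∈ Es, ∀ u v : ↥Vs, G.ends e = s(u.1, v.1) →
    (G.odd e → X u v ≤ c e) ∧ (¬ G.odd e → c e ≤ X u v)

/-- A dual solution of the subgraph problem, recorded as an ambient dual vector
supported on `Vs ∪ Es` (i.e. the dual matrix is padded with zero rows/columns). -/
def IsDualSolOn (G : SignedGraph) (Vs : Finset G.V) (Es : Finset G.E)
    (ωV : G.V → ℝ) (ωE : G.E → ℝ) : Prop :=
  (∀ v, v ∉ Vs → ωV v = 0) ∧ (∀ e, e ∉ Es → ωE e = 0) ∧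
  (∀ e ∈ Es, ¬ G.odd e → ωE e ≤ 0) ∧ (∀ e ∈ Es, G.odd e → 0 ≤ ωE e) ∧
  (DualMat G ωV ωE).PosSemidef

/-- The strict complementarity condition for the subgraph problem. -/
def StrictCompOn (G : SignedGraph) (Vs : Finset G.V) (Es : Finset G.E) (c : G.E → ℝ)
    (X : Matrix ↥Vs ↥Vs ℝ) (ωV : G.V → ℝ) (ωE : G.E → ℝ) : Prop :=
  (X * (DualMat G ωV ωE).submatrix (Subtype.val : ↥Vs → G.V) Subtype.val).trace = 0 ∧
  (∀ e ∈ Es, ∀ u v : ↥Vs, G.ends e = s(u.1, v.1) → (X u v - c e) * ωE e = 0) ∧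
  X.rank + (DualMat G ωV ωE).rank = Vs.card

/-! ## Fans, ladders, rooted odd-K₄⁻ minors -/

/-- The edge set `F` forms a subdivision of a fan: a hub `z`, rim vertices `w`,
subdivided spokes `Sp i` from `z` to `w i` and subdivided rim edges `R i` from
`w i` to `w (i+1)`, all internally disjoint. -/
def IsFanSubdivision (G : SignedGraph) (F : Set G.E) : Prop :=
  ∃ (m : ℕ) (z : G.V) (w : Fin (m + 1) → G.V)
    (Sp : Fin (m + 1) → GPath G) (R : Fin m → GPath G),
    Function.Injective w ∧ (∀ i, w i ≠ z) ∧
    (∀ i, (Sp i).first = z ∧ (Sp i).last = w i ∧ 1 ≤ (Sp i).len) ∧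
    (∀ i : Fin m, (R i).first = w i.castSucc ∧ (R i).last = w i.succ ∧ 1 ≤ (R i).len) ∧
    (∀ i j, i ≠ j → InternallyDisjoint (Sp i) (Sp j)) ∧
    (∀ i j, i ≠ j → InternallyDisjoint (R i) (R j)) ∧
    (∀ i j, InternallyDisjoint (Sp i) (R j)) ∧
    F = (⋃ i, (Sp i).edgeSet) ∪ (⋃ i, (R i).edgeSet)

/-- A tight odd ladder with respect to `c`. -/
structure TightOddLadder (G : SignedGraph) (c : G.E → ℝ) where
  k : ℕ
  cyc : Fin (k + 1) → GCycle G
  tight : ∀ i, IsTight G c (cyc i)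
  distinct : ∀ i j, i ≠ j → (cyc i).edgeSet ≠ (cyc j).edgeSet
  consec : ∀ i : Fin k, ∃ P : GPath G, 1 ≤ P.len ∧
      P.edgeSet = (cyc i.castSucc).edgeSet ∩ (cyc i.succ).edgeSet ∧
      P.vertexSet = (cyc i.castSucc).vertexSet ∩ (cyc i.succ).vertexSet
  fan : ∀ i j : Fin (k + 1), i ≤ j →
      ((cyc i).vertexSet ∩ (cyc j).vertexSet).Nonempty →
      IsFanSubdivision G (⋃ ℓ ∈ Finset.Icc i j, (cyc ℓ).edgeSet)

namespace TightOddLadder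

variable {G : SignedGraph} {c : G.E → ℝ}

def edgeSet (L : TightOddLadder G c) : Set G.E := ⋃ i, (L.cyc i).edgeSet

def vertexSet (L : TightOddLadder G c) : Set G.V := ⋃ i, (L.cyc i).vertexSet

/-- The ladder is rooted at the pair of vertices `{u, v}`. -/
def RootedVV (L : TightOddLadder G c) (u v : G.V) : Prop :=
  u ∈ (L.cyc 0).vertexSet ∧ (∀ i, i ≠ 0 → u ∉ (L.cyc i).vertexSet) ∧
  v ∈ (L.cyc (Fin.last L.k)).vertexSet ∧
  ∀ i, i ≠ Fin.last L.k → v ∉ (L.cyc i).vertexSet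

/-- The ladder is rooted at the pair `{e, v}` of an edge and a vertex. -/
def RootedEV (L : TightOddLadder G c) (e : G.E) (v : G.V) : Prop :=
  e ∈ (L.cyc 0).edgeSet ∧ (∀ i, i ≠ 0 → e ∉ (L.cyc i).edgeSet) ∧
  v ∈ (L.cyc (Fin.last L.k)).vertexSet ∧
  ∀ i, i ≠ Fin.last L.k → v ∉ (L.cyc i).vertexSet

end TightOddLadder

/-- There is an odd cycle through `u` and `v` inside the subgraph induced by `s`. -/
def HasOddCycleThroughIn (G : SignedGraph) (s : Set G.V) (u v : G.V) : Prop :=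
  ∃ C : GCycle G, C.IsOdd ∧ C.vertexSet ⊆ s ∧ u ∈ C.vertexSet ∧ v ∈ C.vertexSet

/-- The subgraph induced by `s` has an odd-K₄⁻ minor rooted at `{u,v}`: five
internally disjoint paths joining two branch vertices `a, b` and the roots `u, v`
such that the cycle through `a,b,u` and the cycle through `a,b,v` are both odd. -/
def HasRootedOddK4MinusIn (G : SignedGraph) (s : Set G.V) (u v : G.V) : Prop :=
  ∃ (a b : G.V) (P₁ P₂ P₃ P₄ P₅ : GPath G),
    a ≠ b ∧ a ≠ u ∧ a ≠ v ∧ b ≠ u ∧ b ≠ v ∧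
    P₁.first = a ∧ P₁.last = u ∧ P₂.first = u ∧ P₂.last = b ∧
    P₃.first = a ∧ P₃.last = v ∧ P₄.first = v ∧ P₄.last = b ∧
    P₅.first = a ∧ P₅.last = b ∧
    (1 ≤ P₁.len ∧ 1 ≤ P₂.len ∧ 1 ≤ P₃.len ∧ 1 ≤ P₄.len ∧ 1 ≤ P₅.len) ∧
    (InternallyDisjoint P₁ P₂ ∧ InternallyDisjoint P₁ P₃ ∧ InternallyDisjoint P₁ P₄ ∧
     InternallyDisjoint P₁ P₅ ∧ InternallyDisjoint P₂ P₃ ∧ InternallyDisjoint P₂ P₄ ∧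
     InternallyDisjoint P₂ P₅ ∧ InternallyDisjoint P₃ P₄ ∧ InternallyDisjoint P₃ P₅ ∧
     InternallyDisjoint P₄ P₅) ∧
    (P₁.vertexSet ⊆ s ∧ P₂.vertexSet ⊆ s ∧ P₃.vertexSet ⊆ s ∧ P₄.vertexSet ⊆ s ∧
     P₅.vertexSet ⊆ s) ∧
    Odd (P₁.oddCount + P₂.oddCount + P₅.oddCount) ∧
    Odd (P₃.oddCount + P₄.oddCount + P₅.oddCount)

/-- A decomposition of a cycle `C` through `u` and `v` into two `u`-`v` paths. -/
def CycleDecomp {G : SignedGraph} (C : GCycle G) (u v : G.V) (P Q : GPath G) : Prop :=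
  P.first = u ∧ P.last = v ∧ Q.first = u ∧ Q.last = v ∧ 1 ≤ P.len ∧ 1 ≤ Q.len ∧
  Disjoint P.edgeSet Q.edgeSet ∧ P.edgeSet ∪ Q.edgeSet = C.edgeSet ∧
  P.vertexSet ∪ Q.vertexSet = C.vertexSet

/-! ## Path reduction -/

/-- `(H, c')` is the path-reduction of `(G, c)` through the path `P`: after a
resigning making all edges of `P` even, the internal vertices of `P` are removed
(together with all edges incident to them) and a new even edge joining the two
endvertices of `P` is inserted, with
`arccos c'(uv) = Σ_{e ∈ E(P)} arccos(c(e))` (for the resigned weights). -/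
def IsPathReduction (G : SignedGraph) (c : G.E → ℝ) (P : GPath G)
    (H : SignedGraph) (c' : H.E → ℝ) : Prop :=
  ∃ S : Set G.V,
    (∀ i : Fin P.len, ¬ Xor' (G.odd (P.edge i)) (Crosses G S (P.edge i))) ∧
    ∃ (fV : {w : G.V // w ∉ P.inner} ≃ H.V)
      (fE : ({e : G.E // ∀ w ∈ G.ends e, w ∉ P.inner} ⊕ Unit) ≃ H.E),
      (∀ (e : {e : G.E // ∀ w ∈ G.ends e, w ∉ P.inner}) (a b : G.V)
          (ha : a ∉ P.inner) (hb : b ∉ P.inner), G.ends e.1 = s(a, b) →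
          H.ends (fE (Sum.inl e)) = s(fV ⟨a, ha⟩, fV ⟨b, hb⟩)) ∧
      (∀ e, H.odd (fE (Sum.inl e)) ↔ Xor' (G.odd e.1) (Crosses G S e.1)) ∧
      (∀ e, c' (fE (Sum.inl e)) = resignVal G S c e.1) ∧
      (∀ (hu : P.first ∉ P.inner) (hv : P.last ∉ P.inner),
          H.ends (fE (Sum.inr ())) = s(fV ⟨P.first, hu⟩, fV ⟨P.last, hv⟩)) ∧
      ¬ H.odd (fE (Sum.inr ())) ∧
      Real.arccos (c' (fE (Sum.inr ()))) = ∑ i, Real.arccos (resignVal G S c (P.edge i))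

/-! ## Spherical tensegrities -/

/-- The Gram matrix of a spherical configuration. -/
noncomputable def gramMat (G : SignedGraph) {n : ℕ}
    (p : G.V → EuclideanSpace ℝ (Fin n)) : Matrix G.V G.V ℝ :=
  Matrix.of fun u v => (inner ℝ (p u) (p v) : ℝ)

/-- Universal rigidity of the spherical tensegrity `(G, Σ, p)`: the Gram matrix of
`p` is the unique solution of `P(G, Σ, c)` where `c(ij) = p(i)·p(j)`. -/
def UniversallyRigid (G : SignedGraph) {n : ℕ}
    (p : G.V → EuclideanSpace ℝ (Fin n)) (c : G.E → ℝ) : Prop :=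
  IsFeasible G c (gramMat G p) ∧ ∀ X, IsFeasible G c X → X = gramMat G p

/-- Super stability of a spherical tensegrity in `𝕊^{n-1}`. -/
def SuperStable (G : SignedGraph) {n : ℕ}
    (p : G.V → EuclideanSpace ℝ (Fin n)) (c : G.E → ℝ) : Prop :=
  ∃ (ωV : G.V → ℝ) (ωE : G.E → ℝ),
    IsDualSol G ωV ωE ∧
    (gramMat G p * DualMat G ωV ωE).trace = 0 ∧
    (∀ e, ∀ u v : G.V, G.ends e = s(u, v) → ((inner ℝ (p u) (p v) : ℝ) - c e) * ωE e = 0) ∧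
    (DualMat G ωV ωE).rank + n = Fintype.card G.V ∧
    ∀ S : Matrix (Fin n) (Fin n) ℝ, S.IsSymm →
      (∀ w : G.V, ∑ i, ∑ j, p w i * S i j * p w j = 0) →
      (∀ e, ∀ u v : G.V, G.ends e = s(u, v) → ωE e ≠ 0 →
        ∑ i, ∑ j, p u i * S i j * p v j = 0) →
      S = 0

/-!
Factor a feasible `X` as the Gram matrix of unit vectors `p`. Walking once around an odd cycle
and flipping the sign of the next vector at every odd edge ends at `-p(v₀)`, so by the triangle
inequality for angles the angles between consecutive signed vectors add up to at least `π`.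
With `x = arccos(c)/π`, the angle at an edge `e` is at most `π x(e)` if `e` is even and
`π (1 - x(e))` if `e` is odd, so the sum is at most `π val(C, x)` and `val(C, x) ≥ 1`, which
is the odd-cycle inequality.
-/

open Real InnerProductGeometry Finset
open scoped RealInnerProductSpace Matrix ComplexOrder

theorem Matrix.PosSemidef.exists_eq_gram {𝕜 n : Type*} [RCLike 𝕜] [Fintype n]
    {X : Matrix n n 𝕜} (hX : X.PosSemidef) : ∃ v : n → EuclideanSpace 𝕜 n, X = gram 𝕜 v := by
  classical
  obtain ⟨B, rfl⟩ : ∃ B : Matrix n n 𝕜, X = Bᴴ * B := by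
    open scoped MatrixOrder Matrix.Norms.L2Operator in
    exact CStarAlgebra.nonneg_iff_eq_star_mul_self.mp hX.nonneg
  refine ⟨fun i => WithLp.toLp 2 (fun j => B j i), ?_⟩
  ext i j
  simp [gram_apply, PiLp.inner_apply, mul_apply, mul_comm]

section Polygon

variable {F : Type*} [NormedAddCommGroup F] [InnerProductSpace ℝ F]

theorem angle_le_sum_angle_smul_prod (w : ℕ → F) (h0 : w 0 ≠ 0) (ε : ℕ → ℝ)
    (hε : ∀ j, ε j ≠ 0) (n : ℕ) :
    angle (w 0) ((∏ j ∈ range n, ε j) • w n) ≤ ∑ j ∈ range n, angle (w j) (ε j • w (j + 1)) := by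
  induction n with
  | zero => simp [angle_self h0]
  | succ n ih =>
    have hP : ∏ j ∈ range n, ε j ≠ 0 := prod_ne_zero_iff.mpr fun j _ => hε j
    calc angle (w 0) ((∏ j ∈ range (n + 1), ε j) • w (n + 1))
        ≤ angle (w 0) ((∏ j ∈ range n, ε j) • w n) +
          angle ((∏ j ∈ range n, ε j) • w n) ((∏ j ∈ range n, ε j) • ε n • w (n + 1)) := by
          rw [prod_range_succ, mul_smul]
          exact angle_le_angle_add_angle _ _ _
      _ ≤ _ := by
          rw [angle_smul_smul hP, sum_range_succ]
          exact add_le_add_left ih _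

open Fin.NatCast in
theorem pi_le_sum_angle_of_prod_eq_neg_one {k : ℕ} (w : Fin (k + 1) → F) (h0 : w 0 ≠ 0)
    (ε : Fin (k + 1) → ℝ) (hε : ∀ i, ε i ≠ 0) (hprod : ∏ i, ε i = -1) :
    π ≤ ∑ i, angle (w i) (ε i • w (i + 1)) := by
  have h := angle_le_sum_angle_smul_prod (fun j => w j) (by simpa using h0) (fun j => ε j)
    (fun j => hε j) (k + 1)
  rw [← Fin.prod_univ_eq_prod_range, ← Fin.sum_univ_eq_sum_range] at h
  simpa [hprod, angle_self_neg_of_nonzero h0] using h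

end Polygon

namespace SignedGraph

variable (G : SignedGraph)

lemma sgn_ne_zero (e : G.E) : G.sgn e ≠ 0 := by
  unfold sgn; split_ifs <;> norm_num

lemma metric_mem_Icc (c : G.E → ℝ) (e : G.E) : G.metric c e ∈ Set.Icc (0 : ℝ) 1 :=
  ⟨div_nonneg (arccos_nonneg _) pi_pos.le, (div_le_one pi_pos).mpr (arccos_le_pi _)⟩

lemma pi_mul_metric (c : G.E → ℝ) (e : G.E) : π * G.metric c e = arccos (c e) :=
  mul_div_cancel₀ _ pi_ne_zero

end SignedGraph

namespace GCycle

variable {G : SignedGraph} (C : GCycle G)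

lemma prod_sgn_edge : ∏ i, G.sgn (C.edge i) = (-1) ^ C.oddCount := by
  classical
  simp [SignedGraph.sgn, prod_ite, oddCount, Nat.card_eq_fintype_card, Fintype.card_subtype]

lemma val_eq_oddCount_add (x : G.E → ℝ) :
    C.val x = C.oddCount + ∑ i, G.sgn (C.edge i) * x (C.edge i) := by
  classical
  have h : ∀ i, (if G.odd (C.edge i) then 1 - x (C.edge i) else x (C.edge i)) =
      (if G.odd (C.edge i) then 1 else 0) + G.sgn (C.edge i) * x (C.edge i) := by
    intro i; unfold SignedGraph.sgn; split_ifs <;> ring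
  simp only [val, h, sum_add_distrib, sum_boole, oddCount, Nat.card_eq_fintype_card,
    Fintype.card_subtype]

end GCycle

section GramFeasible

variable {F : Type*} [NormedAddCommGroup F] [InnerProductSpace ℝ F]
  {G : SignedGraph} {c : G.E → ℝ} {p : G.V → F}

lemma norm_eq_one_of_isFeasible_gram (hp : IsFeasible G c (Matrix.gram ℝ p)) (u : G.V) :
    ‖p u‖ = 1 := by
  have h := hp.2.1 u
  rw [Matrix.gram_apply, real_inner_self_eq_norm_sq] at h
  exact (pow_eq_one_iff_of_nonneg (norm_nonneg _) two_ne_zero).mp h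

open Classical in
lemma angle_sgn_smul_le_of_isFeasible_gram (hp : IsFeasible G c (Matrix.gram ℝ p))
    {e : G.E} {u v : G.V} (he : G.ends e = s(u, v)) :
    angle (p u) (G.sgn e • p v) ≤ π * (if G.odd e then 1 - G.metric c e else G.metric c e) := by
  have hcons := hp.2.2 e (Set.mem_univ e) u v he
  have hangle : angle (p u) (p v) = arccos (Matrix.gram ℝ p u v) := by
    simp [angle, Matrix.gram_apply, norm_eq_one_of_isFeasible_gram hp]
  by_cases hodd : G.odd e
  · rw [SignedGraph.sgn, if_pos hodd, if_pos hodd, neg_one_smul, angle_neg_right, hangle,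
      mul_one_sub, G.pi_mul_metric]
    exact sub_le_sub_left (antitone_arccos (hcons.1 hodd)) π
  · rw [SignedGraph.sgn, if_neg hodd, if_neg hodd, one_smul, hangle, G.pi_mul_metric]
    exact antitone_arccos (hcons.2 hodd)

end GramFeasible

theorem stmt2_feasible_subset_met_general (G : SignedGraph) (c : G.E → ℝ)
    (hfeas : ∃ X, IsFeasible G c X) :
    InMET G (G.metric c) := by
  obtain ⟨X, hX⟩ := hfeas
  obtain ⟨p, rfl⟩ := hX.1.exists_eq_gram
  refine ⟨G.metric_mem_Icc c, fun C hC => ?_⟩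
  have hpi : π ≤ ∑ i, angle (p (C.vtx i)) (G.sgn (C.edge i) • p (C.vtx (i + 1))) :=
    pi_le_sum_angle_of_prod_eq_neg_one _
      (norm_ne_zero_iff.mp (by simp [norm_eq_one_of_isFeasible_gram hX]))
      _ (fun i => G.sgn_ne_zero _) (by rw [C.prod_sgn_edge, hC.neg_one_pow])
  have hle : ∑ i, angle (p (C.vtx i)) (G.sgn (C.edge i) • p (C.vtx (i + 1))) ≤
      π * C.val (G.metric c) := by
    rw [GCycle.val, mul_sum]
    exact sum_le_sum fun i _ => angle_sgn_smul_le_of_isFeasible_gram hX (C.incid i)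
  have hval : 1 ≤ C.val (G.metric c) := le_of_mul_le_mul_left (by linarith) pi_pos
  rw [C.val_eq_oddCount_add] at hval
  linarith

/-- Lemma 2.4. For every signed graph `(G,Σ)` and `c ∈ [-1,1]^E`,
if `P(G,Σ,c)` is feasible then `arccos(c)/π ∈ MET(G,Σ)`. -/
theorem stmt2_feasible_subset_met (G : SignedGraph) (c : G.E → ℝ)
    (hc : ∀ e, c e ∈ Set.Icc (-1 : ℝ) 1) (hfeas : ∃ X, IsFeasible G c X) :
    InMET G (G.metric c) :=
  stmt2_feasible_subset_met_general G c hfeas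
end

section
/- Let (G,Σ) be a signed graph and c ∈ [−1,1]^E with arccos(c)/π ∈ MET(G,Σ). Let C₁ and C₂ be two distinct tight odd cycles with |V(C₁) ∩ V(C₂)| ≥ 2, let u, v be two distinct vertices in V(C₁) ∩ V(C₂), and for i = 1, 2 decompose C_i into two u–v paths P_i¹ and P_i². If P₁¹ is internally disjoint from C₂, then either P₁¹ ∪ P₂¹ or P₁¹ ∪ P₂² is a tight odd cycle. -/
/-!
Tightness of `C₁` and `C₂` gives `val(P₁¹) + val(P₁²) + val(P₂¹) + val(P₂²) = 2`, where
`val` is the sum of the nonnegative edge values `x(e)` (even `e`) and `1 - x(e)` (odd `e`).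
For the `j` with `P₁¹ ∪ P₂ʲ` odd, the complementary closed walk `P₁² ∪ P₂³⁻ʲ` is odd as well.
For `x ∈ MET(G,Σ)` every odd closed walk has value at least `1`: cut at a repeated vertex it
splits into two closed walks, one of them odd; without repeated vertices it is an odd cycle.
Hence both values are exactly `1`, and `P₁¹ ∪ P₂ʲ` is a cycle because `P₁¹` is internally
disjoint from `C₂`.
-/

open Finset

namespace SignedGraph

variable (G : SignedGraph)

open Classical in
noncomputable def edgeVal (x : G.E → ℝ) (e : G.E) : ℝ :=
  if G.odd e then 1 - x e else x e

open Classical in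
noncomputable def oddInd (e : G.E) : ℕ :=
  if G.odd e then 1 else 0

variable {G}

lemma edgeVal_eq (x : G.E → ℝ) (e : G.E) : G.edgeVal x e = G.oddInd e + G.sgn e * x e := by
  unfold edgeVal oddInd sgn
  split_ifs <;> push_cast <;> ring

lemma edgeVal_nonneg {x : G.E → ℝ} (hx : ∀ e, x e ∈ Set.Icc (0 : ℝ) 1) (e : G.E) :
    0 ≤ G.edgeVal x e := by
  obtain ⟨h₀, h₁⟩ := hx e
  unfold edgeVal
  split_ifs <;> linarith

lemma natCard_odd_eq_sum_oddInd {ι : Type} [Fintype ι] (f : ι → G.E) :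
    Nat.card {i // G.odd (f i)} = ∑ i, G.oddInd (f i) := by
  classical
  rw [Nat.card_eq_fintype_card, Fintype.card_subtype, card_filter]
  rfl

end SignedGraph

lemma Finset.sum_comp_eq_sum_toFinset_range {ι E M : Type} [Fintype ι] [DecidableEq E]
    [AddCommMonoid M] {f : ι → E} (hf : Function.Injective f) (g : E → M) :
    ∑ i, g (f i) = ∑ e ∈ (Set.range f).toFinset, g e := by
  rw [Set.toFinset_range, sum_image fun i _ j _ h => hf h]

lemma Finset.sum_range_excise {M : Type} [AddCommMonoid M] (g : ℕ → M) {a d n : ℕ}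
    (h : a + d ≤ n) :
    ∑ i ∈ range n, g i =
      ∑ i ∈ range d, g (a + i) + ∑ i ∈ range (n - d), if i < a then g i else g (i + d) := by
  obtain ⟨m, rfl⟩ := Nat.exists_eq_add_of_le h
  have h₁ : ∑ i ∈ range a, (if i < a then g i else g (i + d)) = ∑ i ∈ range a, g i :=
    sum_congr rfl fun i hi => if_pos (mem_range.mp hi)
  have h₂ : ∑ i ∈ range m, (if a + i < a then g (a + i) else g (a + i + d)) =
      ∑ i ∈ range m, g (a + d + i) :=
    sum_congr rfl fun i _ => by rw [if_neg (by omega), add_right_comm]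
  rw [show a + d + m - d = a + m by omega, sum_range_add, sum_range_add, sum_range_add, h₁, h₂]
  abel

namespace GPath

variable {G : SignedGraph}

noncomputable def val (P : GPath G) (x : G.E → ℝ) : ℝ :=
  ∑ i, G.edgeVal x (P.edge i)

lemma oddCount_eq_sum (P : GPath G) : P.oddCount = ∑ i, G.oddInd (P.edge i) :=
  G.natCard_odd_eq_sum_oddInd P.edge

end GPath

namespace GCycle

variable {G : SignedGraph}

lemma oddCount_eq_sum (C : GCycle G) : C.oddCount = ∑ i, G.oddInd (C.edge i) :=
  G.natCard_odd_eq_sum_oddInd C.edge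

lemma one_le_val {x : G.E → ℝ} (hmet : InMET G x) {C : GCycle G} (hC : C.IsOdd) :
    1 ≤ C.val x := by
  have hval : C.val x = C.oddCount + ∑ i, G.sgn (C.edge i) * x (C.edge i) := by
    rw [oddCount_eq_sum, Nat.cast_sum, ← sum_add_distrib]
    exact sum_congr rfl fun i _ => G.edgeVal_eq x _
  linarith [hmet.2 C hC]

lemma sum_edge_eq_add {M : Type} [AddCommMonoid M] {C : GCycle G} {P Q : GPath G}
    (hd : Disjoint P.edgeSet Q.edgeSet) (hu : P.edgeSet ∪ Q.edgeSet = C.edgeSet)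
    (g : G.E → M) :
    ∑ i, g (C.edge i) = ∑ i, g (P.edge i) + ∑ i, g (Q.edge i) := by
  rw [sum_comp_eq_sum_toFinset_range C.edge_inj, sum_comp_eq_sum_toFinset_range P.edge_inj,
    sum_comp_eq_sum_toFinset_range Q.edge_inj, ← sum_union (Set.disjoint_toFinset.mpr
      (show Disjoint (Set.range P.edge) (Set.range Q.edge) from hd))]
  congr 1
  ext e
  simp only [Set.mem_toFinset, mem_union]
  exact (Set.ext_iff.mp hu e).symm

lemma oddCount_eq_add {C : GCycle G} {P Q : GPath G} (hd : Disjoint P.edgeSet Q.edgeSet)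
    (hu : P.edgeSet ∪ Q.edgeSet = C.edgeSet) : C.oddCount = P.oddCount + Q.oddCount := by
  rw [oddCount_eq_sum, sum_edge_eq_add hd hu, GPath.oddCount_eq_sum, GPath.oddCount_eq_sum]

lemma val_eq_add {C : GCycle G} {P Q : GPath G} (hd : Disjoint P.edgeSet Q.edgeSet)
    (hu : P.edgeSet ∪ Q.edgeSet = C.edgeSet) (x : G.E → ℝ) : C.val x = P.val x + Q.val x :=
  sum_edge_eq_add hd hu (G.edgeVal x)

end GCycle

namespace CycleDecomp

variable {G : SignedGraph} {C : GCycle G} {u v : G.V} {P Q : GPath G}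

lemma symm (h : CycleDecomp C u v P Q) : CycleDecomp C u v Q P := by
  obtain ⟨hPf, hPl, hQf, hQl, hP, hQ, hd, hE, hV⟩ := h
  exact ⟨hQf, hQl, hPf, hPl, hQ, hP, hd.symm, Set.union_comm _ _ ▸ hE, Set.union_comm _ _ ▸ hV⟩

lemma oddCount_eq (h : CycleDecomp C u v P Q) : C.oddCount = P.oddCount + Q.oddCount := by
  obtain ⟨-, -, -, -, -, -, hd, hE, -⟩ := h
  exact GCycle.oddCount_eq_add hd hE

lemma val_eq (h : CycleDecomp C u v P Q) (x : G.E → ℝ) : C.val x = P.val x + Q.val x := by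
  obtain ⟨-, -, -, -, -, -, hd, hE, -⟩ := h
  exact GCycle.val_eq_add hd hE x

lemma internallyDisjoint (h : CycleDecomp C u v P Q) {R : GPath G} (hRf : R.first = u)
    (hRl : R.last = v) (hE : Disjoint R.edgeSet C.edgeSet)
    (hV : ∀ w, w ∈ R.vertexSet → w ∈ C.vertexSet → w = u ∨ w = v) :
    InternallyDisjoint R P := by
  obtain ⟨hPf, hPl, -, -, -, -, -, hEC, hVC⟩ := h
  refine ⟨hE.mono_right (hEC ▸ Set.subset_union_left), fun w hwR hwP => ?_⟩
  have hw := hV w hwR (hVC ▸ Or.inl hwP)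
  rw [hRf, hRl, hPf, hPl]
  exact ⟨hw, hw⟩

end CycleDecomp

/-- Indexed by `ℕ` so that subwalks can be cut out by index arithmetic; only the indices
below `n` (and `n` itself for `v`) matter. -/
structure ClosedWalk (G : SignedGraph) where
  n : ℕ
  v : ℕ → G.V
  e : ℕ → G.E
  closed : v n = v 0
  incid : ∀ i < n, G.ends (e i) = s(v i, v (i + 1))

namespace ClosedWalk

variable {G : SignedGraph} (W : ClosedWalk G)

def edgeSum {M : Type} [AddCommMonoid M] (g : G.E → M) : M :=
  ∑ i ∈ range W.n, g (W.e i)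

def toCycle (hn : 0 < W.n) (hv : Set.InjOn W.v (Set.Iio W.n))
    (he : Set.InjOn W.e (Set.Iio W.n)) : GCycle G where
  k := W.n - 1
  vtx i := W.v i
  edge i := W.e i
  vtx_inj i j h := Fin.ext (hv (Set.mem_Iio.mpr (by omega)) (Set.mem_Iio.mpr (by omega)) h)
  edge_inj i j h := Fin.ext (he (Set.mem_Iio.mpr (by omega)) (Set.mem_Iio.mpr (by omega)) h)
  incid i := by
    rw [W.incid i (by omega), Fin.val_add_one]
    split_ifs with hlast
    · have hi : (i : ℕ) + 1 = W.n := by rw [hlast, Fin.val_last]; omega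
      rw [hi, W.closed]
    · rfl

variable {W}

lemma sum_toCycle_edge {M : Type} [AddCommMonoid M] (hn : 0 < W.n)
    (hv : Set.InjOn W.v (Set.Iio W.n)) (he : Set.InjOn W.e (Set.Iio W.n)) (g : G.E → M) :
    ∑ i, g ((W.toCycle hn hv he).edge i) = W.edgeSum g := by
  unfold edgeSum
  conv_rhs => rw [← Nat.sub_add_cancel hn]
  exact Fin.sum_univ_eq_sum_range (fun i => g (W.e i)) _

lemma edgeSet_toCycle (hn : 0 < W.n) (hv : Set.InjOn W.v (Set.Iio W.n))
    (he : Set.InjOn W.e (Set.Iio W.n)) : (W.toCycle hn hv he).edgeSet = W.e '' Set.Iio W.n := by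
  ext e
  constructor
  · rintro ⟨i, rfl⟩
    have hi : (i : ℕ) < W.n - 1 + 1 := i.isLt
    exact ⟨i, by simp only [Set.mem_Iio]; omega, rfl⟩
  · rintro ⟨i, hi, rfl⟩
    exact ⟨⟨i, show i < W.n - 1 + 1 by simp only [Set.mem_Iio] at hi; omega⟩, rfl⟩

lemma injOn_e_of_injOn_v (hv : Set.InjOn W.v (Set.Iio W.n)) (h₂ : W.n = 2 → W.e 0 ≠ W.e 1) :
    Set.InjOn W.e (Set.Iio W.n) := by
  intro i hi j hj hij
  by_contra hne
  wlog hlt : i < j generalizing i j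
  · exact this hj hi hij.symm (Ne.symm hne) (by omega)
  simp only [Set.mem_Iio] at hi hj
  have hends := W.incid i hi
  rw [hij, W.incid j hj, Sym2.eq_iff] at hends
  rcases hends with ⟨h, -⟩ | ⟨h₁, h₃⟩
  · exact hne (hv hi hj h.symm)
  have hj' : i + 1 = j := hv (by simp only [Set.mem_Iio]; omega) hj h₁.symm
  subst hj'
  rcases Nat.lt_or_ge (i + 2) W.n with hlt₂ | hge₂
  · have := hv hi (show i + 2 ∈ Set.Iio W.n from hlt₂) h₃.symm
    omega
  · have h₀ : W.v 0 = W.v i := by rw [← W.closed, show W.n = i + 1 + 1 by omega, h₃]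
    have hi₀ : 0 = i := hv (show 0 ∈ Set.Iio W.n by simp only [Set.mem_Iio]; omega) hi h₀
    subst hi₀
    exact h₂ (by omega) hij

variable (W)

def loop (a d : ℕ) (had : a + d ≤ W.n) (hv : W.v (a + d) = W.v a) : ClosedWalk G where
  n := d
  v i := W.v (a + i)
  e i := W.e (a + i)
  closed := hv
  incid i hi := W.incid (a + i) (by omega)

def shortcut (a d : ℕ) (had : a + d ≤ W.n) (hv : W.v (a + d) = W.v a) : ClosedWalk G where
  n := W.n - d
  v i := if i ≤ a then W.v i else W.v (i + d)
  e i := if i < a then W.e i else W.e (i + d)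
  closed := by
    rw [if_pos (Nat.zero_le a)]
    split_ifs with h
    · rw [show W.n - d = a by omega, ← hv, show a + d = W.n by omega, W.closed]
    · rw [Nat.sub_add_cancel (by omega), W.closed]
  incid i hi := by
    rcases lt_trichotomy i a with h | rfl | h
    · rw [if_pos h, if_pos h.le, if_pos (show i + 1 ≤ a from h)]
      exact W.incid i (by omega)
    · rw [if_neg (lt_irrefl i), if_pos le_rfl, if_neg (by omega), ← hv, add_right_comm]
      exact W.incid (i + d) (by omega)
    · rw [if_neg (by omega), if_neg (by omega), if_neg (by omega), add_right_comm]
      exact W.incid (i + d) (by omega)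

variable {W}

lemma edgeSum_eq_loop_add_shortcut {M : Type} [AddCommMonoid M] {a d : ℕ} (had : a + d ≤ W.n)
    (hv : W.v (a + d) = W.v a) (g : G.E → M) :
    W.edgeSum g = (W.loop a d had hv).edgeSum g + (W.shortcut a d had hv).edgeSum g := by
  unfold edgeSum
  rw [sum_range_excise _ had]
  congr 1
  exact sum_congr rfl fun i _ => (apply_ite g _ _ _).symm

lemma edgeSum_nonneg {x : G.E → ℝ} (hx : ∀ e, x e ∈ Set.Icc (0 : ℝ) 1) :
    0 ≤ W.edgeSum (G.edgeVal x) :=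
  sum_nonneg fun _ _ => G.edgeVal_nonneg hx _

lemma one_le_edgeSum_of_injOn {x : G.E → ℝ} (hmet : InMET G x)
    (hodd : Odd (W.edgeSum G.oddInd)) (hv : Set.InjOn W.v (Set.Iio W.n)) :
    1 ≤ W.edgeSum (G.edgeVal x) := by
  have hn : 0 < W.n := by
    by_contra h
    simp [edgeSum, show W.n = 0 by omega] at hodd
  have he : Set.InjOn W.e (Set.Iio W.n) := by
    refine injOn_e_of_injOn_v hv fun h₂ he => ?_
    simp only [edgeSum, h₂, sum_range_succ, sum_range_zero, zero_add, he, ← two_mul] at hodd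
    exact Nat.not_odd_iff_even.mpr (even_two_mul _) hodd
  have hC : (W.toCycle hn hv he).IsOdd := by
    rw [GCycle.IsOdd, GCycle.oddCount_eq_sum, sum_toCycle_edge]
    exact hodd
  rw [← sum_toCycle_edge hn hv he]
  exact GCycle.one_le_val hmet hC

theorem one_le_edgeSum {x : G.E → ℝ} (hmet : InMET G x) (W : ClosedWalk G)
    (hodd : Odd (W.edgeSum G.oddInd)) : 1 ≤ W.edgeSum (G.edgeVal x) := by
  induction hn : W.n using Nat.strong_induction_on generalizing W with
  | _ n ih =>
  by_cases hv : Set.InjOn W.v (Set.Iio W.n)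
  · exact one_le_edgeSum_of_injOn hmet hodd hv
  obtain ⟨a, d, hd, had, hva⟩ : ∃ a d, 0 < d ∧ a + d < W.n ∧ W.v (a + d) = W.v a := by
    simp only [Set.InjOn, Set.mem_Iio, not_forall] at hv
    obtain ⟨i, hi, j, hj, hij, hne⟩ := hv
    rcases Nat.lt_or_gt_of_ne hne with h | h
    · exact ⟨i, j - i, by omega, by omega, by rw [Nat.add_sub_cancel' h.le, hij]⟩
    · exact ⟨j, i - j, by omega, by omega, by rw [Nat.add_sub_cancel' h.le, hij]⟩
  rw [edgeSum_eq_loop_add_shortcut had.le hva] at hodd ⊢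
  have hloop := (W.loop a d had.le hva).edgeSum_nonneg (x := x) hmet.1
  have hshort := (W.shortcut a d had.le hva).edgeSum_nonneg (x := x) hmet.1
  rcases Nat.even_or_odd ((W.loop a d had.le hva).edgeSum G.oddInd) with h | h
  · have := ih (W.n - d) (by omega) _ ((Nat.odd_add'.mp hodd).mpr h) rfl
    linarith
  · have := ih d (by omega) _ h rfl
    linarith

end ClosedWalk

namespace GPath

variable {G : SignedGraph}

def vtxN (P : GPath G) (i : ℕ) : G.V :=
  if h : i ≤ P.len then P.vtx ⟨i, Nat.lt_succ_of_le h⟩ else P.last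

def edgeN (P : GPath G) (hP : 0 < P.len) (i : ℕ) : G.E :=
  if h : i < P.len then P.edge ⟨i, h⟩ else P.edge ⟨0, hP⟩

lemma vtxN_of_le (P : GPath G) {i : ℕ} (h : i ≤ P.len) :
    P.vtxN i = P.vtx ⟨i, Nat.lt_succ_of_le h⟩ :=
  dif_pos h

lemma edgeN_of_lt (P : GPath G) (hP : 0 < P.len) {i : ℕ} (h : i < P.len) :
    P.edgeN hP i = P.edge ⟨i, h⟩ :=
  dif_pos h

variable {P Q : GPath G} (hP : 0 < P.len) (hQ : 0 < Q.len) (h₀ : P.first = Q.first)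
  (h₁ : P.last = Q.last)

def appendReverse : ClosedWalk G where
  n := P.len + Q.len
  v i := if i ≤ P.len then P.vtxN i else Q.vtxN (P.len + Q.len - i)
  e i := if i < P.len then P.edgeN hP i else Q.edgeN hQ (P.len + Q.len - 1 - i)
  closed := by
    rw [if_pos (Nat.zero_le _), if_neg (by omega), Nat.sub_self, P.vtxN_of_le (Nat.zero_le _),
      Q.vtxN_of_le (Nat.zero_le _)]
    exact h₀.symm
  incid i hi := by
    rcases Nat.lt_or_ge i P.len with h | h
    · rw [if_pos h, if_pos h.le, if_pos (show i + 1 ≤ P.len from h), P.edgeN_of_lt hP h,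
        P.vtxN_of_le h.le, P.vtxN_of_le h]
      exact P.incid ⟨i, h⟩
    · have hj : P.len + Q.len - 1 - i < Q.len := by omega
      have hQi : Q.vtxN (P.len + Q.len - i) = Q.vtx (Fin.succ ⟨_, hj⟩) := by
        rw [Q.vtxN_of_le (by omega)]
        congr 1
        ext
        simp only [Fin.val_succ]
        omega
      have hQi' : Q.vtxN (P.len + Q.len - (i + 1)) = Q.vtx (Fin.castSucc ⟨_, hj⟩) := by
        rw [Q.vtxN_of_le (by omega)]
        congr 1
        ext
        simp only [Fin.val_castSucc]
        omega
      rw [if_neg (by omega), Q.edgeN_of_lt hQ hj, Q.incid, if_neg (by omega : ¬ i + 1 ≤ P.len),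
        hQi', Sym2.eq_swap, ← hQi]
      congr 1
      split_ifs with hi'
      · obtain rfl : i = P.len := by omega
        rw [Nat.add_sub_cancel_left, Q.vtxN_of_le le_rfl, P.vtxN_of_le le_rfl]
        exact h₁.symm
      · rfl

variable {hP hQ h₀ h₁}

@[simp]
lemma appendReverse_n : (appendReverse hP hQ h₀ h₁).n = P.len + Q.len :=
  rfl

lemma appendReverse_e_of_lt {i : ℕ} (hi : i < P.len) :
    (appendReverse hP hQ h₀ h₁).e i = P.edge ⟨i, hi⟩ :=
  (if_pos hi).trans (P.edgeN_of_lt hP hi)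

lemma appendReverse_e_of_ge {i : ℕ} (hi : P.len ≤ i) (hi' : i < P.len + Q.len) :
    (appendReverse hP hQ h₀ h₁).e i = Q.edge ⟨P.len + Q.len - 1 - i, by omega⟩ :=
  (if_neg (by omega)).trans (Q.edgeN_of_lt hQ _)

lemma edgeSum_appendReverse {M : Type} [AddCommMonoid M] (g : G.E → M) :
    (appendReverse hP hQ h₀ h₁).edgeSum g = ∑ i, g (P.edge i) + ∑ i, g (Q.edge i) := by
  rw [ClosedWalk.edgeSum, appendReverse_n,
    sum_range_add, ← Fin.sum_univ_eq_sum_range, ← sum_range_reflect, ← Fin.sum_univ_eq_sum_range]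
  congr 1
  · exact sum_congr rfl fun i _ => by rw [appendReverse_e_of_lt i.isLt]
  · refine sum_congr rfl fun i _ => ?_
    rw [appendReverse_e_of_ge (by omega) (by omega)]
    congr 2
    ext
    simp only
    omega

lemma appendReverse_v_of_le {i : ℕ} (hi : i ≤ P.len) :
    (appendReverse hP hQ h₀ h₁).v i = P.vtx ⟨i, by omega⟩ :=
  (if_pos hi).trans (P.vtxN_of_le hi)

lemma appendReverse_v_of_gt {i : ℕ} (hi : P.len < i) (hi' : i ≤ P.len + Q.len) :
    (appendReverse hP hQ h₀ h₁).v i = Q.vtx ⟨P.len + Q.len - i, by omega⟩ :=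
  (if_neg (by omega)).trans (Q.vtxN_of_le (by omega))

theorem one_le_val_add {x : G.E → ℝ} (hmet : InMET G x) (hP : 0 < P.len) (hQ : 0 < Q.len)
    (h₀ : P.first = Q.first) (h₁ : P.last = Q.last) (hodd : Odd (P.oddCount + Q.oddCount)) :
    1 ≤ P.val x + Q.val x := by
  have h := (appendReverse hP hQ h₀ h₁).one_le_edgeSum hmet
    (by rwa [edgeSum_appendReverse, ← oddCount_eq_sum, ← oddCount_eq_sum])
  rwa [edgeSum_appendReverse] at h

lemma injOn_appendReverse_v (h : InternallyDisjoint P Q) :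
    Set.InjOn (appendReverse hP hQ h₀ h₁).v (Set.Iio (appendReverse hP hQ h₀ h₁).n) := by
  intro i hi j hj hij
  wlog hle : i ≤ j generalizing i j
  · exact (this hj hi hij.symm (by omega)).symm
  simp only [Set.mem_Iio, appendReverse_n] at hi hj
  rcases le_or_gt j P.len with hjP | hjP
  · rw [appendReverse_v_of_le hjP, appendReverse_v_of_le (hle.trans hjP)] at hij
    exact congrArg Fin.val (P.vtx_inj hij)
  rcases le_or_gt i P.len with hiP | hiP
  · rw [appendReverse_v_of_le hiP, appendReverse_v_of_gt hjP hj.le] at hij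
    have hQ := (h.2 _ ⟨_, rfl⟩ ⟨_, hij.symm⟩).2
    rw [hij] at hQ
    rcases hQ with hQ | hQ <;> have := congrArg Fin.val (Q.vtx_inj hQ) <;>
      simp only [Fin.val_zero, Fin.val_last] at this <;> omega
  · rw [appendReverse_v_of_gt hiP hi.le, appendReverse_v_of_gt hjP hj.le] at hij
    have := congrArg Fin.val (Q.vtx_inj hij)
    simp only at this
    omega

lemma injOn_appendReverse_e (h : Disjoint P.edgeSet Q.edgeSet) :
    Set.InjOn (appendReverse hP hQ h₀ h₁).e (Set.Iio (appendReverse hP hQ h₀ h₁).n) := by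
  intro i hi j hj hij
  wlog hle : i ≤ j generalizing i j
  · exact (this hj hi hij.symm (by omega)).symm
  simp only [Set.mem_Iio, appendReverse_n] at hi hj
  rcases lt_or_ge j P.len with hjP | hjP
  · rw [appendReverse_e_of_lt hjP, appendReverse_e_of_lt (hle.trans_lt hjP)] at hij
    exact congrArg Fin.val (P.edge_inj hij)
  rcases lt_or_ge i P.len with hiP | hiP
  · rw [appendReverse_e_of_lt hiP, appendReverse_e_of_ge hjP hj] at hij
    exact (Set.disjoint_left.mp h ⟨_, rfl⟩ ⟨_, hij.symm⟩).elim
  · rw [appendReverse_e_of_ge hiP hi, appendReverse_e_of_ge hjP hj] at hij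
    have := congrArg Fin.val (Q.edge_inj hij)
    simp only at this
    omega

lemma image_appendReverse_e :
    (appendReverse hP hQ h₀ h₁).e '' Set.Iio (appendReverse hP hQ h₀ h₁).n =
      P.edgeSet ∪ Q.edgeSet := by
  ext e
  simp only [Set.mem_image, Set.mem_Iio, appendReverse_n]
  constructor
  · rintro ⟨i, hi, rfl⟩
    rcases lt_or_ge i P.len with hiP | hiP
    · exact Or.inl ⟨_, (appendReverse_e_of_lt hiP).symm⟩
    · exact Or.inr ⟨_, (appendReverse_e_of_ge hiP hi).symm⟩
  · rintro (⟨i, rfl⟩ | ⟨i, rfl⟩)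
    · exact ⟨i, by omega, appendReverse_e_of_lt i.isLt⟩
    · refine ⟨P.len + Q.len - 1 - i, by omega, ?_⟩
      rw [appendReverse_e_of_ge (by omega) (by omega)]
      congr 1
      ext
      simp only
      omega

end GPath

theorem InternallyDisjoint.exists_cycle {G : SignedGraph} {P Q : GPath G}
    (h : InternallyDisjoint P Q) (hP : 0 < P.len) (hQ : 0 < Q.len) (h₀ : P.first = Q.first)
    (h₁ : P.last = Q.last) : ∃ D : GCycle G, D.edgeSet = P.edgeSet ∪ Q.edgeSet := by
  refine ⟨(GPath.appendReverse hP hQ h₀ h₁).toCycle (show 0 < P.len + Q.len by omega)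
    (GPath.injOn_appendReverse_v h) (GPath.injOn_appendReverse_e h.1), ?_⟩
  exact (ClosedWalk.edgeSet_toCycle _ _ _).trans GPath.image_appendReverse_e

theorem exists_isTight_of_cycleDecomp {G : SignedGraph} {c : G.E → ℝ}
    (hmet : InMET G (G.metric c)) {C₁ C₂ : GCycle G} {u v : G.V} {P R Q S : GPath G}
    (ht₁ : IsTight G c C₁) (ht₂ : IsTight G c C₂)
    (h₁ : CycleDecomp C₁ u v P R) (h₂ : CycleDecomp C₂ u v Q S)
    (hPQ : InternallyDisjoint P Q) (hodd : Odd (P.oddCount + Q.oddCount)) :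
    ∃ D : GCycle G, IsTight G c D ∧ D.edgeSet = P.edgeSet ∪ Q.edgeSet := by
  obtain ⟨hodd₁, hval₁⟩ := ht₁
  obtain ⟨hodd₂, hval₂⟩ := ht₂
  rw [GCycle.IsOdd, h₁.oddCount_eq] at hodd₁
  rw [GCycle.IsOdd, h₂.oddCount_eq] at hodd₂
  rw [h₁.val_eq] at hval₁
  rw [h₂.val_eq] at hval₂
  obtain ⟨hPf, hPl, hRf, hRl, hP, hR, -⟩ := h₁
  obtain ⟨hQf, hQl, hSf, hSl, hQ, hS, -⟩ := h₂
  have hoddRS : Odd (R.oddCount + S.oddCount) := by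
    rw [Nat.odd_iff] at hodd hodd₁ hodd₂ ⊢
    omega
  have hRS := GPath.one_le_val_add hmet hR hS (hRf.trans hSf.symm) (hRl.trans hSl.symm) hoddRS
  obtain ⟨D, hD⟩ := hPQ.exists_cycle hP hQ (hPf.trans hQf.symm) (hPl.trans hQl.symm)
  have hDodd : D.IsOdd := by rwa [GCycle.IsOdd, GCycle.oddCount_eq_add hPQ.1 hD.symm]
  refine ⟨D, ⟨hDodd, ?_⟩, hD⟩
  have hDval := GCycle.one_le_val hmet hDodd
  rw [GCycle.val_eq_add hPQ.1 hD.symm] at hDval ⊢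
  linarith

theorem stmt9_two_tight_cycles_general
    (G : SignedGraph) (c : G.E → ℝ)
    (hmet : InMET G (G.metric c))
    (C₁ C₂ : GCycle G)
    (ht₁ : IsTight G c C₁) (ht₂ : IsTight G c C₂)
    (u v : G.V)
    (P₁₁ P₁₂ P₂₁ P₂₂ : GPath G)
    (hdec₁ : CycleDecomp C₁ u v P₁₁ P₁₂) (hdec₂ : CycleDecomp C₂ u v P₂₁ P₂₂)
    (hint : Disjoint P₁₁.edgeSet C₂.edgeSet ∧
        ∀ w, w ∈ P₁₁.vertexSet → w ∈ C₂.vertexSet → w = u ∨ w = v) :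
    (∃ D : GCycle G, IsTight G c D ∧ D.edgeSet = P₁₁.edgeSet ∪ P₂₁.edgeSet) ∨
    (∃ D : GCycle G, IsTight G c D ∧ D.edgeSet = P₁₁.edgeSet ∪ P₂₂.edgeSet) := by
  have hodd₂ : Odd (P₂₁.oddCount + P₂₂.oddCount) := hdec₂.oddCount_eq ▸ ht₂.1
  rcases Nat.even_or_odd (P₁₁.oddCount + P₂₁.oddCount) with h | h
  · refine Or.inr (exists_isTight_of_cycleDecomp hmet ht₁ ht₂ hdec₁ hdec₂.symm
      (hdec₂.symm.internallyDisjoint hdec₁.1 hdec₁.2.1 hint.1 hint.2) ?_)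
    rw [Nat.odd_iff] at hodd₂ ⊢
    rw [Nat.even_iff] at h
    omega
  · exact Or.inl (exists_isTight_of_cycleDecomp hmet ht₁ ht₂ hdec₁ hdec₂
      (hdec₂.internallyDisjoint hdec₁.1 hdec₁.2.1 hint.1 hint.2) h)

/-- Lemma 4.6. Let `C₁, C₂` be distinct tight odd cycles sharing
at least two vertices, `u ≠ v` common vertices, and decompose each `Cᵢ` into two
`u`-`v` paths `Pᵢ¹, Pᵢ²`. If `P₁¹` is internally disjoint from `C₂`, then
`P₁¹ ∪ P₂¹` or `P₁¹ ∪ P₂²` is a tight odd cycle. -/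
theorem stmt9_two_tight_cycles
    (G : SignedGraph) (c : G.E → ℝ) (hc : ∀ e, c e ∈ Set.Icc (-1 : ℝ) 1)
    (hmet : InMET G (G.metric c))
    (C₁ C₂ : GCycle G) (hne : C₁.edgeSet ≠ C₂.edgeSet)
    (ht₁ : IsTight G c C₁) (ht₂ : IsTight G c C₂)
    (u v : G.V) (huv : u ≠ v)
    (hu : u ∈ C₁.vertexSet ∩ C₂.vertexSet) (hv : v ∈ C₁.vertexSet ∩ C₂.vertexSet)
    (P₁₁ P₁₂ P₂₁ P₂₂ : GPath G)
    (hdec₁ : CycleDecomp C₁ u v P₁₁ P₁₂) (hdec₂ : CycleDecomp C₂ u v P₂₁ P₂₂)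
    (hint : Disjoint P₁₁.edgeSet C₂.edgeSet ∧
        ∀ w, w ∈ P₁₁.vertexSet → w ∈ C₂.vertexSet → w = u ∨ w = v) :
    (∃ D : GCycle G, IsTight G c D ∧ D.edgeSet = P₁₁.edgeSet ∪ P₂₁.edgeSet) ∨
    (∃ D : GCycle G, IsTight G c D ∧ D.edgeSet = P₁₁.edgeSet ∪ P₂₂.edgeSet) :=
  stmt9_two_tight_cycles_general G c hmet C₁ C₂ ht₁ ht₂ u v P₁₁ P₁₂ P₂₁ P₂₂ hdec₁ hdec₂ hint
end
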